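/- arXiv:math/0604472 — 6 statements merged into one kernel-verified Lean document; each statement's English description precedes it below -/
import Mathlib

section
/- The Laplace transform of x ↦ E_α(−x^α) equals p^(α−1)/(1 + p^α) for p > 1, where E_α is the Mittag-Leffler function. -/
open MeasureTheory Real Set

/-! Expanding `E_α(-x^α)` and integrating term by term, the `k`-th term contributes
`(-1)^k Γ(1+kα)⁻¹ ∫ x^{kα} e^{-px} dx = (-1)^k p^{-kα-1}`, so the transform is the geometric
series `p⁻¹ ∑ (-p^{-α})^k`. The same computation for the absolute values gives the ratio
`p^{-α} < 1` when `p > 1`, which justifies exchanging sum and integral. -/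

section LaplaceTermwise

variable {α p x : ℝ} (c : ℝ) (k : ℕ)

lemma mul_rpow_pow_of_nonneg (hx : 0 ≤ x) : (c * x ^ α) ^ k = c ^ k * x ^ (k * α) := by
  rw [mul_pow, mul_comm (k : ℝ), rpow_mul_natCast hx]

lemma norm_exp_neg_mul_mul_pow_div_Gamma (hα : 0 ≤ α) (hx : 0 ≤ x) :
    ‖exp (-p * x) * ((c * x ^ α) ^ k / Gamma (1 + k * α))‖
      = exp (-p * x) * ((‖c‖ * x ^ α) ^ k / Gamma (1 + k * α)) := by
  have hΓ : 0 < Gamma (1 + k * α) := Gamma_pos_of_pos (by positivity)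
  rw [norm_mul, norm_div, norm_pow, norm_mul, norm_of_nonneg (exp_pos _).le,
    norm_of_nonneg (rpow_nonneg hx _), norm_of_nonneg hΓ.le]

lemma integrableOn_exp_neg_mul_mul_pow_div_Gamma (hα : 0 ≤ α) (hp : 0 < p) :
    IntegrableOn (fun x => exp (-p * x) * ((c * x ^ α) ^ k / Gamma (1 + k * α))) (Ioi 0) := by
  have h := integrableOn_rpow_mul_exp_neg_mul_rpow (s := k * α) (p := 1) (b := p)
    (by linarith [mul_nonneg k.cast_nonneg hα]) one_pos hp
  refine IntegrableOn.congr_fun (h.const_mul (c ^ k / Gamma (1 + k * α))) (fun x hx => ?_)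
    measurableSet_Ioi
  simp only [rpow_one, mul_rpow_pow_of_nonneg c k (le_of_lt hx)]
  ring

lemma integral_exp_neg_mul_mul_pow_div_Gamma (hα : 0 ≤ α) (hp : 0 < p) :
    ∫ x in Ioi 0, exp (-p * x) * ((c * x ^ α) ^ k / Gamma (1 + k * α)) = (c / p ^ α) ^ k / p := by
  have hGamma := integral_rpow_mul_exp_neg_mul_Ioi (a := k * α + 1) (by positivity) hp
  rw [add_sub_cancel_right, add_comm] at hGamma
  calc _ = c ^ k / Gamma (1 + k * α) * ∫ x in Ioi 0, x ^ (k * α) * exp (-(p * x)) := by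
        rw [← integral_const_mul]
        refine setIntegral_congr_fun measurableSet_Ioi fun x hx => ?_
        simp only [mul_rpow_pow_of_nonneg c k (le_of_lt hx), neg_mul]
        ring
    _ = (c / p ^ α) ^ k / p := by
        rw [hGamma, one_div, inv_rpow hp.le, rpow_add hp, rpow_one, mul_comm (k : ℝ),
          rpow_mul_natCast hp.le]
        field_simp
        rw [← mul_pow, mul_div_cancel₀ _ (by positivity)]

end LaplaceTermwise

theorem mittagLeffler_laplace_transform (α p : ℝ) (hα : 0 < α) (hp : 1 < p) :
    ∫ x in Ioi (0 : ℝ),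
        Real.exp (-p * x) * ∑' k : ℕ, (-(x ^ α)) ^ k / Real.Gamma (1 + k * α)
      = p ^ (α - 1) / (1 + p ^ α) := by
  have hp0 : 0 < p := by linarith
  have hpα : 1 < p ^ α := one_lt_rpow hp hα
  set f : ℕ → ℝ → ℝ := fun k x => exp (-p * x) * ((-1 * x ^ α) ^ k / Gamma (1 + k * α))
  have hratio : ‖-1 / p ^ α‖ < 1 := by
    rw [norm_div, norm_neg, norm_one, norm_of_nonneg (by positivity)]
    exact (div_lt_one (by positivity)).2 hpα
  have hnorm : ∀ k, ∫ x in Ioi 0, ‖f k x‖ = (‖(-1 : ℝ)‖ / p ^ α) ^ k / p := fun k => by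
    rw [← integral_exp_neg_mul_mul_pow_div_Gamma _ k hα.le hp0]
    exact setIntegral_congr_fun measurableSet_Ioi fun x hx =>
      norm_exp_neg_mul_mul_pow_div_Gamma _ k hα.le (le_of_lt hx)
  have hsummable : Summable fun k => ∫ x in Ioi 0, ‖f k x‖ := by
    simp_rw [hnorm]
    refine (summable_geometric_of_lt_one (by positivity) ?_).div_const p
    simpa only [norm_div, norm_norm, norm_of_nonneg (by positivity : 0 ≤ p ^ α)] using hratio
  calc _ = ∫ x in Ioi 0, ∑' k, f k x := by simp only [f, neg_one_mul, tsum_mul_left]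
    _ = ∑' k, ∫ x in Ioi 0, f k x := (integral_tsum_of_summable_integral_norm
          (fun k => integrableOn_exp_neg_mul_mul_pow_div_Gamma _ k hα.le hp0) hsummable).symm
    _ = ∑' k : ℕ, (-1 / p ^ α) ^ k / p := by
          simp only [f, integral_exp_neg_mul_mul_pow_div_Gamma _ _ hα.le hp0]
    _ = p ^ (α - 1) / (1 + p ^ α) := by
          rw [tsum_div_const, tsum_geometric_of_norm_lt_one hratio, rpow_sub_one hp0.ne',
            neg_div, sub_neg_eq_add, one_add_div (by positivity), inv_div]
          ring
end

section
/- For c > 0, ν > 0, μ > 0, the Laplace transform of t ↦ t^(μ−1) E_{ν,μ}(−c^ν t^ν) equals p^(ν−μ)/(p^ν + c^ν) for p > c. -/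
open MeasureTheory Real Set

/-! Each term `t ^ (μ + kν - 1)` of the series has Laplace transform `Γ(μ + kν) / p ^ (μ + kν)`,
which cancels the Gamma factor and leaves the geometric series of ratio `-(c / p) ^ ν`. Since
`c < p` the series of the absolute values converges too, and this justifies integrating
term by term. -/

lemma integrableOn_rpow_sub_one_mul_exp_neg_mul {a r : ℝ} (ha : 0 < a) (hr : 0 < r) :
    IntegrableOn (fun t : ℝ => t ^ (a - 1) * exp (-(r * t))) (Ioi 0) := by
  simpa using integrableOn_rpow_mul_exp_neg_mul_rpow (s := a - 1) (p := 1) (by linarith) one_pos hr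

lemma integral_rpow_sub_one_mul_exp_neg_mul {a r : ℝ} (ha : 0 < a) (hr : 0 < r) :
    ∫ t in Ioi 0, t ^ (a - 1) * exp (-(r * t)) = Gamma a / r ^ a := by
  rw [integral_rpow_mul_exp_neg_mul_Ioi ha hr, div_rpow zero_le_one hr.le, one_rpow,
    one_div_mul_eq_div]

theorem integral_exp_neg_mul_mul_tsum_rpow {p : ℝ} (hp : 0 < p) {a s : ℕ → ℝ}
    (hs : ∀ k, 0 < s k) (hsum : Summable fun k => |a k| * Gamma (s k) / p ^ s k) :
    ∫ t in Ioi 0, exp (-p * t) * ∑' k, a k * t ^ (s k - 1)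
      = ∑' k, a k * Gamma (s k) / p ^ s k := by
  set F : ℕ → ℝ → ℝ := fun k t => a k * (t ^ (s k - 1) * exp (-(p * t)))
  have hF_int : ∀ k, IntegrableOn (F k) (Ioi 0) := fun k =>
    (integrableOn_rpow_sub_one_mul_exp_neg_mul (hs k) hp).const_mul (a k)
  have hF_integral : ∀ k, ∫ t in Ioi 0, F k t = a k * Gamma (s k) / p ^ s k := fun k => by
    rw [integral_const_mul, integral_rpow_sub_one_mul_exp_neg_mul (hs k) hp, mul_div_assoc]
  have hF_norm_integral : ∀ k, ∫ t in Ioi 0, ‖F k t‖ = |a k| * Gamma (s k) / p ^ s k := by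
    intro k
    rw [mul_div_assoc, ← integral_rpow_sub_one_mul_exp_neg_mul (hs k) hp,
      ← integral_const_mul]
    refine setIntegral_congr_fun measurableSet_Ioi fun t (ht : 0 < t) => ?_
    rw [norm_mul, norm_mul, norm_of_nonneg (rpow_nonneg ht.le _),
      norm_of_nonneg (exp_pos _).le, norm_eq_abs]
  have hF_tsum : ∀ t, exp (-p * t) * ∑' k, a k * t ^ (s k - 1) = ∑' k, F k t := fun t => by
    rw [← tsum_mul_left]
    exact tsum_congr fun k => by simp only [F, neg_mul]; ring
  simp_rw [hF_tsum, ← hF_integral]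
  exact (integral_tsum_of_summable_integral_norm hF_int
    (hsum.congr fun k => (hF_norm_integral k).symm)).symm

lemma rpow_sub_one_mul_pow_mul_rpow {t : ℝ} (ht : 0 < t) (x μ ν : ℝ) (k : ℕ) :
    t ^ (μ - 1) * (x * t ^ ν) ^ k = x ^ k * t ^ (μ + k * ν - 1) := by
  rw [mul_pow, ← rpow_mul_natCast ht.le, mul_left_comm, ← rpow_add ht]
  ring_nf

lemma rpow_add_natCast_mul {p : ℝ} (hp : 0 < p) (μ ν : ℝ) (k : ℕ) :
    p ^ (μ + k * ν) = p ^ μ * (p ^ ν) ^ k := by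
  rw [rpow_add hp, mul_comm (k : ℝ), rpow_mul_natCast hp.le]

theorem integral_exp_neg_mul_mul_rpow_mul_mittagLeffler {x μ ν p : ℝ} (hμ : 0 < μ) (hν : 0 ≤ ν)
    (hp : 0 < p) (hx : |x| < p ^ ν) :
    ∫ t in Ioi (0 : ℝ),
        exp (-p * t) * (t ^ (μ - 1) * ∑' k : ℕ, (x * t ^ ν) ^ k / Gamma (μ + k * ν))
      = p ^ (ν - μ) / (p ^ ν - x) := by
  have hpν : 0 < p ^ ν := rpow_pos_of_pos hp ν
  have hs : ∀ k : ℕ, 0 < μ + k * ν := fun k => by positivity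
  have hcoeff : ∀ y : ℝ, ∀ k : ℕ,
      y ^ k / Gamma (μ + k * ν) * Gamma (μ + k * ν) / p ^ (μ + k * ν)
        = (p ^ μ)⁻¹ * (y / p ^ ν) ^ k := fun y k => by
    rw [div_mul_cancel₀ _ (Gamma_pos_of_pos (hs k)).ne', rpow_add_natCast_mul hp, div_pow]
    field_simp
  have hratio : |x / p ^ ν| < 1 := by
    rwa [abs_div, abs_of_pos hpν, div_lt_one hpν]
  have hsum : Summable fun k : ℕ =>
      |x ^ k / Gamma (μ + k * ν)| * Gamma (μ + k * ν) / p ^ (μ + k * ν) := by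
    simp_rw [abs_div, abs_of_pos (Gamma_pos_of_pos (hs _)), abs_pow, hcoeff]
    refine (summable_geometric_of_abs_lt_one ?_).mul_left _
    rwa [abs_div, abs_abs, ← abs_div]
  have hintegrand : ∀ t ∈ Ioi (0 : ℝ),
      exp (-p * t) * (t ^ (μ - 1) * ∑' k : ℕ, (x * t ^ ν) ^ k / Gamma (μ + k * ν))
        = exp (-p * t) * ∑' k : ℕ, x ^ k / Gamma (μ + k * ν) * t ^ (μ + k * ν - 1) :=
    fun t (ht : 0 < t) => by
      rw [← tsum_mul_left]
      congr 1
      exact tsum_congr fun k => by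
        rw [← mul_div_assoc, rpow_sub_one_mul_pow_mul_rpow ht]; ring
  rw [setIntegral_congr_fun measurableSet_Ioi hintegrand,
    integral_exp_neg_mul_mul_tsum_rpow hp hs hsum]
  simp_rw [hcoeff]
  rw [tsum_mul_left, tsum_geometric_of_abs_lt_one hratio, rpow_sub hp]
  field_simp

theorem mittagLeffler_two_param_laplace_transform
    (c ν μ p : ℝ) (hc : 0 < c) (hν : 0 < ν) (hμ : 0 < μ) (hp : c < p) :
    ∫ t in Ioi (0 : ℝ),
        Real.exp (-p * t) *
          (t ^ (μ - 1) * ∑' k : ℕ, (-(c ^ ν * t ^ ν)) ^ k / Real.Gamma (μ + k * ν))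
      = p ^ (ν - μ) / (p ^ ν + c ^ ν) := by
  have hcν : |-c ^ ν| < p ^ ν := by
    rw [abs_neg, abs_of_pos (rpow_pos_of_pos hc ν)]
    exact rpow_lt_rpow hc.le hp hν
  simp_rw [← neg_mul]
  rw [integral_exp_neg_mul_mul_rpow_mul_mittagLeffler hμ hν.le (hc.trans hp) hcν, sub_neg_eq_add]
end

section
/- The function N(t) = N₀ Γ(μ) t^(μ−1) E_{ν,μ}(−c^ν t^ν) solves the fractional integral equation N(t) − N₀ t^(μ−1) = −c^ν · (₀D_t^(−ν) N)(t) for t > 0, where ₀D_t^(−ν) is the Riemann–Liouville fractional integral of order ν. -/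
/-!
Write `N(u) = N₀ Γ(μ) u^(μ-1) E_{ν,μ}(λ u^ν)` with `λ = -c^ν` and expand `E_{ν,μ}` as its series.
By the Beta integral the Riemann–Liouville integral maps `u^(p-1)` to `Γ(p)/Γ(p+ν) t^(p+ν-1)`, so
integrating termwise turns `t^(μ-1) E_{ν,μ}(λ t^ν)` into `t^(μ+ν-1) E_{ν,μ+ν}(λ t^ν)`. The equation
is then the recurrence `E_{ν,μ}(z) = 1/Γ(μ) + z E_{ν,μ+ν}(z)`. Termwise integration is justified by
absolute convergence: the ratio test applies because `Γ(b+ν)/Γ(b) → ∞`, which follows from the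
log-convexity of `Γ`.
-/

open MeasureTheory Real Set intervalIntegral Filter

namespace Real

theorem Gamma_add_one_le_Gamma_add_mul_rpow {b θ : ℝ} (hb : 0 < b) (hθ : 0 < θ) (hθ1 : θ < 1) :
    Gamma (b + 1) ≤ Gamma (b + θ) * (b + θ) ^ (1 - θ) := by
  have hbθ : 0 < b + θ := by linarith
  have hΓ : 0 < Gamma (b + θ) := Gamma_pos_of_pos hbθ
  have h := Gamma_mul_add_mul_le_rpow_Gamma_mul_rpow_Gamma hbθ (by linarith : 0 < b + θ + 1)
    hθ (by linarith : 0 < 1 - θ) (by ring)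
  rwa [show θ * (b + θ) + (1 - θ) * (b + θ + 1) = b + 1 by ring, Gamma_add_one hbθ.ne',
    mul_rpow hbθ.le hΓ.le, ← mul_assoc, mul_comm _ ((b + θ) ^ (1 - θ)), mul_assoc,
    ← rpow_add hΓ, add_sub_cancel, rpow_one, mul_comm] at h

theorem tendsto_Gamma_add_div_Gamma_atTop {ν : ℝ} (hν : 0 < ν) :
    Tendsto (fun b => Gamma (b + ν) / Gamma b) atTop atTop := by
  -- monotonicity of `Γ` on `[2, ∞)` reduces to an exponent `θ < 1`, where log-convexity applies
  set θ := min ν (1 / 2)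
  have hθ : 0 < θ := lt_min hν (by norm_num)
  have hθ1 : θ < 1 := (min_le_right _ _).trans_lt (by norm_num)
  refine tendsto_atTop_mono' atTop ?_ ((tendsto_rpow_atTop hθ).atTop_div_const two_pos)
  filter_upwards [eventually_ge_atTop 2] with b hb
  have hb0 : 0 < b := by linarith
  have hmono : Gamma (b + θ) ≤ Gamma (b + ν) :=
    Gamma_strictMonoOn_Ici.monotoneOn (by simp; linarith) (by simp; linarith)
      (by linarith [min_le_left ν (1 / 2)])
  have hpow : (b + θ) ^ (1 - θ) ≤ 2 * b ^ (1 - θ) :=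
    calc (b + θ) ^ (1 - θ) ≤ (2 * b) ^ (1 - θ) :=
          rpow_le_rpow (by linarith) (by linarith) (by linarith)
      _ = 2 ^ (1 - θ) * b ^ (1 - θ) := mul_rpow (by norm_num) hb0.le
      _ ≤ 2 * b ^ (1 - θ) := by
          gcongr
          exact rpow_le_self_of_one_le (by norm_num) (by linarith)
  have hstep : b * Gamma b ≤ Gamma (b + ν) * (2 * b ^ (1 - θ)) := by
    rw [← Gamma_add_one hb0.ne']
    exact (Gamma_add_one_le_Gamma_add_mul_rpow hb0 hθ hθ1).trans
      (mul_le_mul hmono hpow (rpow_nonneg (by linarith) _) (Gamma_pos_of_pos (by linarith)).le)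
  have hsplit : b = b ^ θ * b ^ (1 - θ) := by rw [← rpow_add hb0, add_sub_cancel, rpow_one]
  rw [le_div_iff₀ (Gamma_pos_of_pos hb0)]
  nlinarith [rpow_pos_of_pos hb0 (1 - θ), Gamma_pos_of_pos hb0]

end Real

/-- The Mittag-Leffler function `E_{ν,μ}`. -/
noncomputable def mittagLeffler (ν μ z : ℝ) : ℝ :=
  ∑' k : ℕ, z ^ k / Gamma (μ + k * ν)

theorem summable_pow_div_Gamma_add_mul {ν μ : ℝ} (hν : 0 < ν) (hμ : 0 < μ) (z : ℝ) :
    Summable fun k : ℕ => z ^ k / Gamma (μ + k * ν) := by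
  refine summable_of_ratio_norm_eventually_le (r := 1 / 2) (by norm_num) ?_
  have hb : Tendsto (fun k : ℕ => μ + k * ν) atTop atTop :=
    tendsto_atTop_add_const_left _ _ (tendsto_natCast_atTop_atTop.atTop_mul_const hν)
  filter_upwards [hb.eventually ((tendsto_Gamma_add_div_Gamma_atTop hν).eventually_ge_atTop
    (2 * |z|))] with k hk
  have hΓ : 0 < Gamma (μ + k * ν) := Gamma_pos_of_pos (by positivity)
  rw [le_div_iff₀ hΓ] at hk
  rw [show μ + ((k + 1 : ℕ) : ℝ) * ν = μ + k * ν + ν by push_cast; ring]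
  simp only [norm_div, norm_pow, norm_eq_abs, abs_of_pos hΓ,
    abs_of_pos (Gamma_pos_of_pos (by positivity : 0 < μ + k * ν + ν))]
  calc |z| ^ (k + 1) / Gamma (μ + k * ν + ν) = |z| ^ k * (|z| / Gamma (μ + k * ν + ν)) := by ring
    _ ≤ |z| ^ k * (1 / (2 * Gamma (μ + k * ν))) := by
        refine mul_le_mul_of_nonneg_left ?_ (by positivity)
        rw [div_le_div_iff₀ (Gamma_pos_of_pos (by positivity)) (by positivity)]
        linarith
    _ = 1 / 2 * (|z| ^ k / Gamma (μ + k * ν)) := by ring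

theorem mittagLeffler_eq_inv_Gamma_add_mul {ν μ : ℝ} (hν : 0 < ν) (hμ : 0 < μ) (z : ℝ) :
    mittagLeffler ν μ z = 1 / Gamma μ + z * mittagLeffler ν (μ + ν) z := by
  rw [mittagLeffler, (summable_pow_div_Gamma_add_mul hν hμ z).tsum_eq_zero_add, mittagLeffler,
    ← tsum_mul_left]
  congr 1
  · simp
  · refine tsum_congr fun k => ?_
    rw [pow_succ', mul_div_assoc]
    congr 3
    push_cast
    ring

theorem integral_rpow_mul_sub_rpow {a b t : ℝ} (ha : 0 < a) (hb : 0 < b) (ht : 0 < t) :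
    ∫ u in (0:ℝ)..t, u ^ (a - 1) * (t - u) ^ (b - 1) =
      Gamma a * Gamma b / Gamma (a + b) * t ^ (a + b - 1) := by
  apply Complex.ofReal_injective
  rw [← intervalIntegral.integral_ofReal]
  convert Complex.betaIntegral_scaled (a : ℂ) (b : ℂ) ht using 1
  · refine intervalIntegral.integral_congr fun u hu => ?_
    rw [uIcc_of_le ht.le] at hu
    push_cast [Complex.ofReal_cpow hu.1, Complex.ofReal_cpow (sub_nonneg.2 hu.2)]
    rfl
  · rw [Complex.betaIntegral_eq_Gamma_mul_div _ _ (by simpa using ha) (by simpa using hb)]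
    push_cast [Complex.ofReal_cpow ht.le, ← Complex.Gamma_ofReal]
    ring

theorem intervalIntegrable_rpow_mul_sub_rpow {a b t : ℝ} (ha : 0 < a) (hb : 0 < b) (ht : 0 < t) :
    IntervalIntegrable (fun u => u ^ (a - 1) * (t - u) ^ (b - 1)) volume 0 t :=
  -- the integral of a non-integrable function would be the junk value `0`
  intervalIntegrable_of_integral_ne_zero <| by
    rw [integral_rpow_mul_sub_rpow ha hb ht]
    have := Gamma_pos_of_pos ha
    have := Gamma_pos_of_pos hb
    have := Gamma_pos_of_pos (add_pos ha hb)
    positivity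

theorem integral_sub_rpow_mul_tsum {ν t : ℝ} (hν : 0 < ν) (ht : 0 < t) {a p : ℕ → ℝ}
    (hp : ∀ k, 0 < p k)
    (hs : Summable fun k => |a k| * (Gamma (p k) / Gamma (p k + ν) * t ^ (p k + ν - 1))) :
    ∫ u in (0:ℝ)..t, (t - u) ^ (ν - 1) * ∑' k, a k * u ^ (p k - 1) =
      Gamma ν * ∑' k, a k * (Gamma (p k) / Gamma (p k + ν) * t ^ (p k + ν - 1)) := by
  set F : ℕ → ℝ → ℝ := fun k u => a k * (u ^ (p k - 1) * (t - u) ^ (ν - 1))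
  have hint : ∀ k, Integrable (F k) (volume.restrict (Ioc 0 t)) := fun k =>
    (intervalIntegrable_iff_integrableOn_Ioc_of_le ht.le).1
      ((intervalIntegrable_rpow_mul_sub_rpow (hp k) hν ht).const_mul (a k))
  have hF : ∀ k, ∫ u in Ioc 0 t, F k u =
      Gamma ν * (a k * (Gamma (p k) / Gamma (p k + ν) * t ^ (p k + ν - 1))) := fun k => by
    rw [← integral_of_le ht.le, intervalIntegral.integral_const_mul,
      integral_rpow_mul_sub_rpow (hp k) hν ht]
    ring
  have hnorm : ∀ k, ∫ u in Ioc 0 t, ‖F k u‖ =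
      Gamma ν * (|a k| * (Gamma (p k) / Gamma (p k + ν) * t ^ (p k + ν - 1))) := fun k => by
    rw [setIntegral_congr_fun measurableSet_Ioc (g := fun u => |a k| *
      (u ^ (p k - 1) * (t - u) ^ (ν - 1))) fun u hu => by
        simp only [F, norm_mul, norm_eq_abs, abs_of_nonneg (rpow_nonneg hu.1.le _),
          abs_of_nonneg (rpow_nonneg (sub_nonneg.2 hu.2) _)],
      ← integral_of_le ht.le, intervalIntegral.integral_const_mul,
      integral_rpow_mul_sub_rpow (hp k) hν ht]
    ring
  have hsum : Summable fun k => ∫ u in Ioc 0 t, ‖F k u‖ := by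
    simpa only [hnorm] using hs.mul_left (Gamma ν)
  calc ∫ u in (0:ℝ)..t, (t - u) ^ (ν - 1) * ∑' k, a k * u ^ (p k - 1)
      = ∫ u in Ioc 0 t, ∑' k, F k u := by
        rw [integral_of_le ht.le]
        refine integral_congr_ae (ae_of_all _ fun u => ?_)
        simp only [F, ← tsum_mul_left]
        exact tsum_congr fun k => by ring
    _ = ∑' k, ∫ u in Ioc 0 t, F k u := (integral_tsum_of_summable_integral_norm hint hsum).symm
    _ = _ := by rw [tsum_congr hF, tsum_mul_left]

/-- The Riemann–Liouville fractional integral `₀D_t^(-ν) f`. -/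
noncomputable def riemannLiouvilleIntegral (ν : ℝ) (f : ℝ → ℝ) (t : ℝ) : ℝ :=
  1 / Gamma ν * ∫ u in (0:ℝ)..t, (t - u) ^ (ν - 1) * f u

theorem riemannLiouvilleIntegral_congr {ν t : ℝ} {f g : ℝ → ℝ} (ht : 0 ≤ t)
    (h : ∀ u ∈ Ioc 0 t, f u = g u) :
    riemannLiouvilleIntegral ν f t = riemannLiouvilleIntegral ν g t := by
  unfold riemannLiouvilleIntegral
  rw [integral_of_le ht, integral_of_le ht,
    setIntegral_congr_fun measurableSet_Ioc fun u hu => by rw [h u hu]]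

theorem riemannLiouvilleIntegral_const_mul (ν t C : ℝ) (f : ℝ → ℝ) :
    riemannLiouvilleIntegral ν (fun u => C * f u) t = C * riemannLiouvilleIntegral ν f t := by
  simp only [riemannLiouvilleIntegral, mul_left_comm _ C, intervalIntegral.integral_const_mul]

theorem riemannLiouvilleIntegral_rpow_mul_mittagLeffler {ν μ t : ℝ} (hν : 0 < ν) (hμ : 0 < μ)
    (ht : 0 < t) (l : ℝ) :
    riemannLiouvilleIntegral ν (fun u => u ^ (μ - 1) * mittagLeffler ν μ (l * u ^ ν)) t =
      t ^ (μ + ν - 1) * mittagLeffler ν (μ + ν) (l * t ^ ν) := by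
  have hpos : ∀ k : ℕ, 0 < μ + k * ν := fun k => by positivity
  have hseries : ∀ u ∈ Ioc 0 t, u ^ (μ - 1) * mittagLeffler ν μ (l * u ^ ν) =
      ∑' k : ℕ, l ^ k / Gamma (μ + k * ν) * u ^ (μ + k * ν - 1) := fun u hu => by
    rw [mittagLeffler, ← tsum_mul_left]
    refine tsum_congr fun k => ?_
    rw [mul_pow, ← rpow_mul_natCast hu.1.le, show μ + k * ν - 1 = μ - 1 + ν * k by ring,
      rpow_add hu.1]
    ring
  have hterm : ∀ (x : ℝ) (k : ℕ), x ^ k / Gamma (μ + k * ν) *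
      (Gamma (μ + k * ν) / Gamma (μ + k * ν + ν) * t ^ (μ + k * ν + ν - 1)) =
        t ^ (μ + ν - 1) * ((x * t ^ ν) ^ k / Gamma (μ + ν + k * ν)) := fun x k => by
    have := (Gamma_pos_of_pos (hpos k)).ne'
    rw [show μ + k * ν + ν - 1 = μ + ν - 1 + ν * k by ring, rpow_add ht,
      rpow_mul_natCast ht.le, show μ + k * ν + ν = μ + ν + k * ν by ring]
    field_simp
    ring
  have hs : Summable fun k : ℕ => |l ^ k / Gamma (μ + k * ν)| *
      (Gamma (μ + k * ν) / Gamma (μ + k * ν + ν) * t ^ (μ + k * ν + ν - 1)) := by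
    simp only [abs_div, abs_pow, abs_of_pos (Gamma_pos_of_pos (hpos _)), hterm]
    exact (summable_pow_div_Gamma_add_mul hν (by linarith) _).mul_left _
  rw [riemannLiouvilleIntegral_congr ht.le hseries, riemannLiouvilleIntegral,
    integral_sub_rpow_mul_tsum hν ht hpos hs, tsum_congr (hterm l), tsum_mul_left, ← mul_assoc,
    one_div_mul_cancel (Gamma_pos_of_pos hν).ne', one_mul, mittagLeffler]

theorem mittagLeffler_solves_fractional_integral_equation_general
    (μ ν c N₀ : ℝ) (hμ : 0 < μ) (hν : 0 < ν)
    (N : ℝ → ℝ)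
    (hN : ∀ t : ℝ, 0 < t →
      N t = N₀ * Real.Gamma μ * t ^ (μ - 1) *
        ∑' k : ℕ, (-(c ^ ν * t ^ ν)) ^ k / Real.Gamma (μ + k * ν)) :
    ∀ t : ℝ, 0 < t →
      N t - N₀ * t ^ (μ - 1)
        = -c ^ ν * ((1 / Real.Gamma ν) * ∫ u in (0 : ℝ)..t, (t - u) ^ (ν - 1) * N u) := by
  have hNE : ∀ u, 0 < u →
      N u = N₀ * Gamma μ * (u ^ (μ - 1) * mittagLeffler ν μ (-c ^ ν * u ^ ν)) := fun u hu => by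
    rw [hN u hu, mittagLeffler, neg_mul, mul_assoc]
  intro t ht
  change _ = -c ^ ν * riemannLiouvilleIntegral ν N t
  rw [riemannLiouvilleIntegral_congr ht.le fun u hu => hNE u hu.1,
    riemannLiouvilleIntegral_const_mul, riemannLiouvilleIntegral_rpow_mul_mittagLeffler hν hμ ht,
    hNE t ht, mittagLeffler_eq_inv_Gamma_add_mul hν hμ, add_sub_right_comm, rpow_add ht]
  have := (Gamma_pos_of_pos hμ).ne'
  field_simp
  ring

theorem mittagLeffler_solves_fractional_integral_equation
    (μ ν c N₀ : ℝ) (hμ : 0 < μ) (hν : 0 < ν) (hc : 0 < c)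
    (N : ℝ → ℝ)
    (hN : ∀ t : ℝ, 0 < t →
      N t = N₀ * Real.Gamma μ * t ^ (μ - 1) *
        ∑' k : ℕ, (-(c ^ ν * t ^ ν)) ^ k / Real.Gamma (μ + k * ν)) :
    ∀ t : ℝ, 0 < t →
      N t - N₀ * t ^ (μ - 1)
        = -c ^ ν * ((1 / Real.Gamma ν) * ∫ u in (0 : ℝ)..t, (t - u) ^ (ν - 1) * N u) :=
  mittagLeffler_solves_fractional_integral_equation_general μ ν c N₀ hμ hν N hN
end

section
/- For c > 0, ν > 0, μ > 0, γ > 0, and p > c, the Laplace transform of t ↦ t^(μ−1) E^γ_{ν,μ}(−c^ν t^ν) equals p^(νγ−μ)/(p^ν + c^ν)^γ, i.e. 1/(p^(μ−νγ)(p^ν+c^ν)^γ) times p^0 appropriately. -/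
/-!
Expand the Prabhakar function in its defining series and integrate term by term: the Laplace
transform of `t ^ (μ + k ν - 1)` is `Γ(μ + k ν) / p ^ (μ + k ν)`, and the Gamma factor cancels
the one in the `k`-th coefficient. What remains is `p ^ (-μ)` times the binomial series
`∑ (γ)_k x ^ k / k! = (1 - x) ^ (-γ)` at `x = -(c / p) ^ ν`. Since `c < p` this also converges
absolutely, and that absolute series bounds the integrals of the absolute values of the terms,
so the interchange of sum and integral is justified.
-/

open MeasureTheory Real Set Nat

theorem Ring.multichoose_eq_ascPochhammer_eval_div {K : Type*} [Field K] [CharZero K] (a : K)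
    (n : ℕ) :
    Ring.multichoose a n = (ascPochhammer K n).eval a / n ! := by
  rw [← Polynomial.ascPochhammer_smeval_eq_eval,
    ← Ring.factorial_nsmul_multichoose_eq_ascPochhammer, nsmul_eq_mul]
  exact (mul_div_cancel_left₀ _ (cast_ne_zero.2 n.factorial_ne_zero)).symm

theorem hasSum_ascPochhammer_eval_mul_pow_div_factorial (a : ℝ) {x : ℝ} (hx : |x| < 1) :
    HasSum (fun n ↦ (ascPochhammer ℝ n).eval a * x ^ n / n !) ((1 - x) ^ (-a)) := by
  have hx' : x ∈ Metric.eball (0 : ℝ) 1 := by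
    rw [Metric.mem_eball, edist_zero_right, enorm_eq_nnnorm]
    exact_mod_cast hx
  have := (one_div_one_sub_rpow_hasFPowerSeriesOnBall_zero a).hasSum hx'
  rw [FormalMultilinearSeries.ofScalars_apply_eq', zero_add, one_div,
    ← rpow_neg (by linarith [le_abs_self x])] at this
  simpa only [← Ring.multichoose_eq, Ring.multichoose_eq_ascPochhammer_eval_div, smul_eq_mul,
    div_mul_eq_mul_div] using this

theorem Real.rpow_add_natCast_mul {x : ℝ} (hx : 0 < x) (a b : ℝ) (k : ℕ) :
    x ^ (a + k * b) = x ^ a * (x ^ b) ^ k := by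
  rw [rpow_add hx, mul_comm (k : ℝ), rpow_mul_natCast hx.le]

theorem integral_rpow_sub_one_mul_exp_neg_mul_Ioi {s r : ℝ} (hs : 0 < s) (hr : 0 < r) :
    ∫ t in Ioi 0, t ^ (s - 1) * exp (-(r * t)) = Gamma s / r ^ s := by
  rw [integral_rpow_mul_exp_neg_mul_Ioi hs hr, div_rpow zero_le_one hr.le, one_rpow,
    one_div_mul_eq_div]

theorem integrableOn_rpow_sub_one_mul_exp_neg_mul_Ioi {s r : ℝ} (hs : 0 < s) (hr : 0 < r) :
    IntegrableOn (fun t ↦ t ^ (s - 1) * exp (-(r * t))) (Ioi 0) := by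
  simpa only [rpow_one, neg_mul] using
    integrableOn_rpow_mul_exp_neg_mul_rpow (p := 1) (by linarith) one_pos hr

theorem integral_exp_neg_mul_mul_rpow_mul_tsum {a : ℕ → ℝ} {μ ν r : ℝ} (hμ : 0 < μ)
    (hν : 0 ≤ ν) (hr : 0 < r) (ha : Summable fun k ↦ |a k| * Gamma (μ + k * ν) / r ^ (μ + k * ν)) :
    ∫ t in Ioi 0, exp (-r * t) * (t ^ (μ - 1) * ∑' k, a k * (t ^ ν) ^ k) =
      ∑' k, a k * Gamma (μ + k * ν) / r ^ (μ + k * ν) := by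
  set F : ℕ → ℝ → ℝ := fun k t ↦ exp (-r * t) * (t ^ (μ - 1) * (a k * (t ^ ν) ^ k))
  have hs : ∀ k : ℕ, 0 < μ + k * ν := fun k ↦ by positivity
  have hF : ∀ k, ∀ t ∈ Ioi (0 : ℝ), F k t = a k * (t ^ (μ + k * ν - 1) * exp (-(r * t))) := by
    intro k t ht
    rw [show μ + k * ν - 1 = μ - 1 + k * ν by ring, Real.rpow_add_natCast_mul ht]
    simp only [F, neg_mul]
    ring
  have hF_int : ∀ k, Integrable (F k) (volume.restrict (Ioi 0)) := fun k ↦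
    IntegrableOn.congr_fun ((integrableOn_rpow_sub_one_mul_exp_neg_mul_Ioi (hs k) hr).const_mul
      (a k)) (fun t ht ↦ (hF k t ht).symm) measurableSet_Ioi
  have hF_norm : ∀ k, ∫ t in Ioi 0, ‖F k t‖ = |a k| * Gamma (μ + k * ν) / r ^ (μ + k * ν) := by
    intro k
    rw [setIntegral_congr_fun measurableSet_Ioi fun t (ht : 0 < t) ↦ by
        rw [hF k t ht, norm_mul, norm_eq_abs,
          norm_of_nonneg (by positivity : 0 ≤ t ^ (μ + k * ν - 1) * exp (-(r * t)))],
      integral_const_mul, integral_rpow_sub_one_mul_exp_neg_mul_Ioi (hs k) hr, mul_div_assoc]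
  have hF_integral : ∀ k, ∫ t in Ioi 0, F k t = a k * Gamma (μ + k * ν) / r ^ (μ + k * ν) := by
    intro k
    rw [setIntegral_congr_fun measurableSet_Ioi (hF k), integral_const_mul,
      integral_rpow_sub_one_mul_exp_neg_mul_Ioi (hs k) hr, mul_div_assoc]
  calc ∫ t in Ioi 0, exp (-r * t) * (t ^ (μ - 1) * ∑' k, a k * (t ^ ν) ^ k)
      = ∫ t in Ioi 0, ∑' k, F k t := by simp only [F, tsum_mul_left]
    _ = ∑' k, ∫ t in Ioi 0, F k t :=
      (integral_tsum_of_summable_integral_norm hF_int (by simpa only [hF_norm] using ha)).symm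
    _ = _ := tsum_congr hF_integral

/-- `prabhakar γ ν μ z` is `E^γ_{ν,μ}(z)`. -/
noncomputable def prabhakar (γ ν μ z : ℝ) : ℝ :=
  ∑' k : ℕ, (ascPochhammer ℝ k).eval γ * z ^ k / (k ! * Gamma (μ + k * ν))

theorem integral_exp_neg_mul_mul_rpow_mul_prabhakar {γ ν μ p z : ℝ} (hγ : 0 < γ) (hν : 0 ≤ ν)
    (hμ : 0 < μ) (hp : 0 < p) (hz : |z| < p ^ ν) :
    ∫ t in Ioi 0, exp (-p * t) * (t ^ (μ - 1) * prabhakar γ ν μ (z * t ^ ν)) =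
      (1 - z / p ^ ν) ^ (-γ) / p ^ μ := by
  set a : ℝ → ℕ → ℝ := fun w k ↦ (ascPochhammer ℝ k).eval γ * w ^ k / (k ! * Gamma (μ + k * ν))
  have hpν : 0 < p ^ ν := rpow_pos_of_pos hp ν
  have hΓ : ∀ k : ℕ, 0 < Gamma (μ + k * ν) := fun k ↦ Gamma_pos_of_pos (by positivity)
  have hseries : ∀ t, prabhakar γ ν μ (z * t ^ ν) = ∑' k, a z k * (t ^ ν) ^ k :=
    fun t ↦ tsum_congr fun k ↦ by simp only [a]; ring
  have hterm : ∀ w k, a w k * Gamma (μ + k * ν) / p ^ (μ + k * ν) =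
      (ascPochhammer ℝ k).eval γ * (w / p ^ ν) ^ k / k ! / p ^ μ := by
    intro w k
    simp only [a]
    rw [Real.rpow_add_natCast_mul hp, div_pow]
    field_simp [(hΓ k).ne']
  have habs : ∀ k, |a z k| = a |z| k := fun k ↦ by
    simp only [a, abs_div, abs_mul, abs_pow, abs_of_pos (ascPochhammer_pos k γ hγ),
      abs_of_pos (hΓ k), Nat.abs_cast]
  have hx : |z / p ^ ν| < 1 := by rwa [abs_div, abs_of_pos hpν, div_lt_one hpν]
  have hsummable : Summable fun k ↦ |a z k| * Gamma (μ + k * ν) / p ^ (μ + k * ν) := by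
    refine ((hasSum_ascPochhammer_eval_mul_pow_div_factorial γ (x := |z / p ^ ν|)
      (by rwa [abs_abs])).summable.div_const (p ^ μ)).congr fun k ↦ ?_
    rw [habs, hterm, abs_div, abs_of_pos hpν]
  simp only [hseries]
  rw [integral_exp_neg_mul_mul_rpow_mul_tsum hμ hν hp hsummable, tsum_congr (hterm z),
    tsum_div_const, (hasSum_ascPochhammer_eval_mul_pow_div_factorial γ hx).tsum_eq]

theorem prabhakar_laplace_transform
    (c ν μ γ p : ℝ) (hc : 0 < c) (hν : 0 < ν) (hμ : 0 < μ) (hγ : 0 < γ) (hp : c < p) :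
    ∫ t in Ioi (0 : ℝ),
        Real.exp (-p * t) *
          (t ^ (μ - 1) * ∑' k : ℕ,
            (ascPochhammer ℝ k).eval γ * (-(c ^ ν * t ^ ν)) ^ k /
              (k.factorial * Real.Gamma (μ + k * ν)))
      = p ^ (ν * γ - μ) / (p ^ ν + c ^ ν) ^ γ := by
  have hp0 : 0 < p := hc.trans hp
  have hcν : 0 < c ^ ν := rpow_pos_of_pos hc ν
  have hpν : 0 < p ^ ν := rpow_pos_of_pos hp0 ν
  have hz : |-c ^ ν| < p ^ ν := by
    rw [abs_neg, abs_of_pos hcν]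
    exact rpow_lt_rpow hc.le hp hν
  calc _ = ∫ t in Ioi 0, exp (-p * t) * (t ^ (μ - 1) * prabhakar γ ν μ (-c ^ ν * t ^ ν)) := by
        simp only [prabhakar, neg_mul (c ^ ν)]
    _ = (1 - -c ^ ν / p ^ ν) ^ (-γ) / p ^ μ :=
        integral_exp_neg_mul_mul_rpow_mul_prabhakar hγ hν.le hμ hp0 hz
    _ = p ^ (ν * γ - μ) / (p ^ ν + c ^ ν) ^ γ := by
        rw [show 1 - -c ^ ν / p ^ ν = (p ^ ν + c ^ ν) / p ^ ν by field_simp; ring,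
          rpow_neg (by positivity), div_rpow (by positivity) hpν.le, inv_div, ← rpow_mul hp0.le,
          rpow_sub hp0]
        ring
end

section
/- The function N(t) = (N₀ t^(μ−1)/ν)[E_{ν,μ−1}(−c^ν t^ν) + (1−μ+ν) E_{ν,μ}(−c^ν t^ν)] solves the fractional integral equation N(t) − N₀ t^(μ−1) E_{ν,μ}(−c^ν t^ν) = −c^ν (₀D_t^(−ν) N)(t) for t > 0. -/
open MeasureTheory Real Set intervalIntegral Filter

/-- log-convexity consequence: `Γ(y+ν) ≥ (y-1)^ν Γ(y)` for `y > 1`, `ν > 0`. -/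
lemma gamma_ratio_lb {y ν : ℝ} (hy : 1 < y) (hν : 0 < ν) :
    (y - 1) ^ ν * Real.Gamma y ≤ Real.Gamma (y + ν) := by
  have hy1 : (0:ℝ) < y - 1 := by linarith
  have hy0 : (0:ℝ) < y := by linarith
  have hyv : (0:ℝ) < y + ν := by linarith
  have hG1 : 0 < Real.Gamma (y - 1) := Real.Gamma_pos_of_pos hy1
  have hG2 : 0 < Real.Gamma y := Real.Gamma_pos_of_pos hy0
  have hG3 : 0 < Real.Gamma (y + ν) := Real.Gamma_pos_of_pos hyv
  have hrec : Real.Gamma y = (y - 1) * Real.Gamma (y - 1) := by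
    have := Real.Gamma_add_one (ne_of_gt hy1)
    rw [sub_add_cancel] at this
    exact this
  have hslope := Real.convexOn_log_Gamma.slope_mono_adjacent
    (x := y - 1) (y := y) (z := y + ν) (mem_Ioi.2 hy1) (mem_Ioi.2 hyv)
    (by linarith) (by linarith)
  simp only [Function.comp_apply] at hslope
  have h1 : Real.log (Real.Gamma y) - Real.log (Real.Gamma (y-1)) = Real.log (y - 1) := by
    rw [hrec, Real.log_mul (ne_of_gt hy1) (ne_of_gt hG1)]; ring
  rw [show y - (y - 1) = 1 by ring, show y + ν - y = ν by ring, div_one, h1] at hslope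
  have h2 : ν * Real.log (y - 1) + Real.log (Real.Gamma y) ≤ Real.log (Real.Gamma (y + ν)) := by
    have := (le_div_iff₀ hν).mp hslope
    nlinarith
  calc (y - 1) ^ ν * Real.Gamma y
      = Real.exp (ν * Real.log (y - 1) + Real.log (Real.Gamma y)) := by
        rw [Real.exp_add, Real.exp_log hG2, ← Real.log_rpow hy1, Real.exp_log (Real.rpow_pos_of_pos hy1 ν)]
    _ ≤ Real.exp (Real.log (Real.Gamma (y + ν))) := Real.exp_le_exp.2 h2
    _ = Real.Gamma (y + ν) := Real.exp_log hG3

/-- Master summability lemma. -/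
lemma summable_poly_gamma (a b β ν x : ℝ) (ha : 0 ≤ a) (hb : 0 ≤ b) (hν : 0 < ν) :
    Summable (fun k : ℕ => (a + b * k) * x ^ k / Real.Gamma (β + k * ν)) := by
  apply summable_of_ratio_norm_eventually_le (r := 1/2) (by norm_num)
  set M : ℝ := max 1 ((4 * (|x| + 1)) ^ (1/ν)) with hM
  obtain ⟨K, hK⟩ := exists_nat_ge ((1 + M - β) / ν + 1)
  rw [eventually_atTop]
  refine ⟨K + 1, fun k hk => ?_⟩
  have hkK : ((K:ℝ)) ≤ k := Nat.cast_le.2 (le_trans (Nat.le_succ K) hk)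
  have hk1 : (1:ℝ) ≤ k := by exact_mod_cast le_trans (Nat.le_add_left 1 K) hk
  have hky : 1 + M ≤ β + k * ν := by
    have : (1 + M - β) / ν + 1 ≤ (k:ℝ) := le_trans hK hkK
    have h2 : (1 + M - β) / ν ≤ (k:ℝ) := by linarith
    have := (div_le_iff₀ hν).mp h2
    linarith
  have hM1 : (1:ℝ) ≤ M := le_max_left _ _
  set y := β + k * ν with hy
  have hy1 : 1 < y := by dsimp [y]; nlinarith
  have hyM : M ≤ y - 1 := by dsimp [y]; linarith
  have hG0 : 0 < Real.Gamma y := Real.Gamma_pos_of_pos (by linarith)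
  have hG1 : 0 < Real.Gamma (y + ν) := Real.Gamma_pos_of_pos (by linarith)
  -- (y-1)^ν ≥ 4(|x|+1)
  have hpow : 4 * (|x| + 1) ≤ (y - 1) ^ ν := by
    have h1 : ((4 * (|x| + 1)) ^ (1/ν)) ≤ y - 1 := le_trans (le_max_right _ _) hyM
    have hx4 : (0:ℝ) < 4 * (|x| + 1) := by positivity
    calc 4 * (|x| + 1) = ((4 * (|x| + 1)) ^ (1/ν)) ^ ν := by
          rw [← Real.rpow_mul hx4.le, one_div, inv_mul_cancel₀ hν.ne', Real.rpow_one]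
      _ ≤ (y - 1) ^ ν := Real.rpow_le_rpow (Real.rpow_nonneg (le_of_lt hx4) _) h1 hν.le
  have hG : 4 * (|x| + 1) * Real.Gamma y ≤ Real.Gamma (y + ν) :=
    le_trans (mul_le_mul_of_nonneg_right hpow hG0.le) (gamma_ratio_lb hy1 hν)
  have hcast : β + (↑(k+1) : ℝ) * ν = y + ν := by push_cast [hy]; ring
  rw [hcast, Real.norm_eq_abs, Real.norm_eq_abs, abs_div, abs_mul, abs_pow,
    abs_of_nonneg (show (0:ℝ) ≤ a + b * ↑(k+1) by positivity), abs_of_pos hG1,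
    abs_div, abs_mul, abs_pow,
    abs_of_nonneg (show (0:ℝ) ≤ a + b * (k:ℝ) by positivity), abs_of_pos hG0]
  rw [show (1:ℝ)/2 * ((a + b * ↑k) * |x| ^ k / Real.Gamma y)
      = (1/2 * ((a + b * ↑k) * |x| ^ k)) / Real.Gamma y by ring,
    div_le_div_iff₀ hG1 hG0]
  have hA : a + b * ((k:ℝ)+1) ≤ 2 * (a + b * k) := by nlinarith
  have hP : (0:ℝ) ≤ (a + b * (k:ℝ)) * |x| ^ k := by positivity
  have hGle := mul_le_mul_of_nonneg_left hG hP
  push_cast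
  rw [pow_succ]
  nlinarith [abs_nonneg x, pow_nonneg (abs_nonneg x) k, hG0, hGle,
    mul_le_mul_of_nonneg_right (mul_le_mul_of_nonneg_right hA (pow_nonneg (abs_nonneg x) k)) (abs_nonneg x)]

lemma betaIntervalIntegrable {p q : ℝ} (t : ℝ) (hp : -1 < p) (hq : -1 < q) (ht : 0 < t) :
    IntervalIntegrable (fun u : ℝ => u ^ p * (t - u) ^ q) volume 0 t := by
  have h2 : IntervalIntegrable (fun u : ℝ => u ^ p * (t - u) ^ q) volume 0 (t/2) := by
    apply (intervalIntegrable_rpow' hp).mul_continuousOn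
    apply ContinuousOn.rpow_const (by fun_prop)
    intro u hu
    rw [uIcc_of_le (by linarith)] at hu
    left
    have := hu.2
    intro h
    simp only [Set.mem_Icc] at hu
    nlinarith [hu.1, hu.2]
  have h3 : IntervalIntegrable (fun u : ℝ => u ^ p * (t - u) ^ q) volume (t/2) t := by
    have base := ((intervalIntegrable_rpow' (a := 0) (b := t/2) hq).comp_sub_left t)
    rw [sub_zero, show t - t/2 = t/2 by ring] at base
    replace base := base.symm
    apply IntervalIntegrable.continuousOn_mul base
    apply ContinuousOn.rpow_const (by fun_prop)
    intro u hu
    rw [uIcc_of_le (by linarith)] at hu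
    left
    simp only [Set.mem_Icc] at hu
    nlinarith [hu.1, ht]
  exact h2.trans h3

lemma betaIntegrableOn {p q : ℝ} (t : ℝ) (hp : -1 < p) (hq : -1 < q) (ht : 0 < t) :
    IntegrableOn (fun u : ℝ => u ^ p * (t - u) ^ q) (Ioc 0 t) :=
  (intervalIntegrable_iff_integrableOn_Ioc_of_le ht.le).mp (betaIntervalIntegrable t hp hq ht)

lemma betaIntegralValue {p q t : ℝ} (hp : -1 < p) (hq : -1 < q) (ht : 0 < t) :
    ∫ u in (0:ℝ)..t, u ^ p * (t - u) ^ q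
      = Real.Gamma (p+1) * Real.Gamma (q+1) / Real.Gamma (p+q+2) * t ^ (p+q+1) := by
  have hs : 0 < ((p:ℂ)+1).re := by simp; linarith
  have ht' : 0 < ((q:ℂ)+1).re := by simp; linarith
  have hG3c : Complex.Gamma ((p:ℂ)+1+((q:ℂ)+1)) ≠ 0 := by
    apply Complex.Gamma_ne_zero
    intro m h
    have := congrArg Complex.re h
    simp at this
    have hm : (0:ℝ) ≤ m := Nat.cast_nonneg m
    linarith
  have hBeta : Complex.betaIntegral ((p:ℂ)+1) ((q:ℂ)+1)
      = Complex.Gamma ((p:ℂ)+1) * Complex.Gamma ((q:ℂ)+1) / Complex.Gamma ((p:ℂ)+1+((q:ℂ)+1)) := by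
    rw [eq_div_iff hG3c, mul_comm (Complex.betaIntegral _ _), ← Complex.Gamma_mul_Gamma_eq_betaIntegral hs ht']
  have hscaled := Complex.betaIntegral_scaled ((p:ℂ)+1) ((q:ℂ)+1) ht
  rw [show (p:ℂ)+1-1 = (p:ℂ) by ring, show (q:ℂ)+1-1 = (q:ℂ) by ring] at hscaled
  have key : ((∫ u in (0:ℝ)..t, u ^ p * (t-u) ^ q : ℝ) : ℂ)
      = ∫ x in (0:ℝ)..t, (x:ℂ)^(p:ℂ) * ((t:ℂ)-x)^(q:ℂ) := by
    rw [← intervalIntegral.integral_ofReal,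
      intervalIntegral.integral_of_le ht.le, intervalIntegral.integral_of_le ht.le]
    apply setIntegral_congr_fun measurableSet_Ioc
    intro x hx
    simp only
    rw [Complex.ofReal_mul, Complex.ofReal_cpow hx.1.le,
      Complex.ofReal_cpow (by linarith [hx.2] : (0:ℝ) ≤ t - x), Complex.ofReal_sub]
  have final : ((∫ u in (0:ℝ)..t, u ^ p * (t-u) ^ q : ℝ) : ℂ)
      = (t:ℂ) ^ ((p:ℂ)+1+((q:ℂ)+1)-1) *
        (Complex.Gamma ((p:ℂ)+1) * Complex.Gamma ((q:ℂ)+1) / Complex.Gamma ((p:ℂ)+1+((q:ℂ)+1))) := by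
    rw [key, hscaled, hBeta]
  have cast1 : ((p:ℂ)+1) = ((p+1:ℝ):ℂ) := by push_cast; ring
  have cast2 : ((q:ℂ)+1) = ((q+1:ℝ):ℂ) := by push_cast; ring
  have cast3 : ((p:ℂ)+1+((q:ℂ)+1)) = ((p+q+2:ℝ):ℂ) := by push_cast; ring
  have cast4 : ((p:ℂ)+1+((q:ℂ)+1)-1) = ((p+q+1:ℝ):ℂ) := by push_cast; ring
  rw [cast4, cast3, cast1, cast2, Complex.Gamma_ofReal, Complex.Gamma_ofReal,
    Complex.Gamma_ofReal, ← Complex.ofReal_cpow ht.le] at final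
  have final2 : ((∫ u in (0:ℝ)..t, u ^ p * (t-u) ^ q : ℝ) : ℂ)
      = ((Real.Gamma (p+1) * Real.Gamma (q+1) / Real.Gamma (p+q+2) * t ^ (p+q+1) : ℝ) : ℂ) := by
    rw [final]; push_cast; ring
  exact Complex.ofReal_inj.mp final2

lemma summable_simple (β ν x : ℝ) (hν : 0 < ν) :
    Summable (fun k : ℕ => x ^ k / Real.Gamma (β + k * ν)) := by
  simpa using summable_poly_gamma 1 0 β ν x zero_le_one le_rfl hν

lemma rpow_split {t : ℝ} (ht : 0 < t) (a b : ℝ) (k : ℕ) :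
    t ^ (a + k * b) = t ^ a * (t ^ b) ^ k := by
  rw [Real.rpow_add ht, ← Real.rpow_natCast (t ^ b) k, ← Real.rpow_mul ht.le, mul_comm b (k:ℝ)]

theorem combination_solves_fractional_integral_equation
    (c μ ν N₀ : ℝ) (hc : 0 < c) (hμ : 1 < μ) (hν : 0 < ν)
    (N : ℝ → ℝ)
    (hN : ∀ t : ℝ, 0 < t →
      N t = N₀ * t ^ (μ - 1) / ν *
        ((∑' k : ℕ, (-(c ^ ν * t ^ ν)) ^ k / Real.Gamma ((μ - 1) + k * ν))
          + (1 - μ + ν) * ∑' k : ℕ, (-(c ^ ν * t ^ ν)) ^ k / Real.Gamma (μ + k * ν))) :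
    ∀ t : ℝ, 0 < t →
      N t - N₀ * t ^ (μ - 1) * (∑' k : ℕ, (-(c ^ ν * t ^ ν)) ^ k / Real.Gamma (μ + k * ν))
        = -c ^ ν * ((1 / Real.Gamma ν) * ∫ u in (0 : ℝ)..t, (t - u) ^ (ν - 1) * N u) := by
  intro t ht
  set s : ℝ := c ^ ν with hs
  have hs0 : 0 < s := Real.rpow_pos_of_pos hc ν
  have hμ1 : (0:ℝ) < μ - 1 := by linarith
  have hargpos : ∀ k : ℕ, (0:ℝ) < μ - 1 + k * ν := fun k => by positivity
  have harg2pos : ∀ k : ℕ, (0:ℝ) < μ + k * ν := fun k => by nlinarith [hargpos k]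
  have harg3pos : ∀ k : ℕ, (0:ℝ) < μ + k * ν + ν := fun k => by nlinarith [harg2pos k]
  have hG1pos : ∀ k : ℕ, 0 < Real.Gamma (μ - 1 + k * ν) :=
    fun k => Real.Gamma_pos_of_pos (hargpos k)
  have hG2pos : ∀ k : ℕ, 0 < Real.Gamma (μ + k * ν) :=
    fun k => Real.Gamma_pos_of_pos (harg2pos k)
  have hG3pos : ∀ k : ℕ, 0 < Real.Gamma (μ + k * ν + ν) :=
    fun k => Real.Gamma_pos_of_pos (harg3pos k)
  have hGνpos : 0 < Real.Gamma ν := Real.Gamma_pos_of_pos hν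
  have hGrec : ∀ k : ℕ, Real.Gamma (μ + k * ν) = (μ - 1 + k * ν) * Real.Gamma (μ - 1 + k * ν) :=
    fun k => by
      rw [show μ + (k:ℝ) * ν = (μ - 1 + k * ν) + 1 by ring, Real.Gamma_add_one (hargpos k).ne']
  set aco : ℕ → ℝ := fun k => (N₀ / ν) * (-s) ^ k *
    (1 / Real.Gamma (μ - 1 + k * ν) + (1 - μ + ν) / Real.Gamma (μ + k * ν)) with haco
  set V : ℕ → ℝ := fun k => Real.Gamma (μ + k * ν) * Real.Gamma ν / Real.Gamma (μ + k * ν + ν)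
    * t ^ (μ + k * ν + ν - 1) with hV
  -- Claim A: series representation of N
  have claimA : ∀ u : ℝ, 0 < u → N u = ∑' k : ℕ, aco k * u ^ (μ - 1 + k * ν) := by
    intro u hu
    have hsum1 : Summable (fun k : ℕ => (-(s * u ^ ν)) ^ k / Real.Gamma (μ - 1 + k * ν)) :=
      summable_simple _ _ _ hν
    have hsum2 : Summable (fun k : ℕ => (-(s * u ^ ν)) ^ k / Real.Gamma (μ + k * ν)) :=
      summable_simple _ _ _ hν
    rw [hN u hu, ← tsum_mul_left, ← Summable.tsum_add hsum1 (hsum2.mul_left _), ← tsum_mul_left]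
    apply tsum_congr
    intro k
    simp only [haco]
    rw [rpow_split hu (μ-1) ν k,
      show (-(s * u ^ ν)) ^ k = (-s) ^ k * (u ^ ν) ^ k by rw [← neg_mul, mul_pow]]
    ring
  -- summability of the main coefficient series at t
  have hsumA : Summable (fun k : ℕ => aco k * t ^ (μ - 1 + k * ν)) := by
    apply Summable.congr
      ((((summable_simple (μ-1) ν (-(s * t ^ ν)) hν).add
        ((summable_simple μ ν (-(s * t ^ ν)) hν).mul_left (1 - μ + ν))).mul_left
          (N₀ * t ^ (μ - 1) / ν)))
    intro k
    simp only [haco]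
    rw [rpow_split ht (μ-1) ν k,
      show (-(s * t ^ ν)) ^ k = (-s) ^ k * (t ^ ν) ^ k by rw [← neg_mul, mul_pow]]
    ring
  set e : ℕ → ℝ := fun k => N₀ * (k:ℝ) * (-s) ^ k * t ^ (μ - 1 + k * ν)
    / Real.Gamma (μ + k * ν) with he
  have hsume : Summable e := by
    apply Summable.congr
      ((summable_poly_gamma 0 1 μ ν (-(s * t ^ ν)) le_rfl zero_le_one hν).mul_left
        (N₀ * t ^ (μ - 1)))
    intro k
    simp only [he]
    rw [rpow_split ht (μ-1) ν k,
      show (-(s * t ^ ν)) ^ k = (-s) ^ k * (t ^ ν) ^ k by rw [← neg_mul, mul_pow]]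
    ring
  -- LHS as a series
  have hLHS : N t - N₀ * t ^ (μ - 1) * (∑' k : ℕ, (-(s * t ^ ν)) ^ k / Real.Gamma (μ + k * ν))
      = ∑' k : ℕ, e k := by
    have hsumB : Summable (fun k : ℕ =>
        N₀ * t ^ (μ - 1) * ((-(s * t ^ ν)) ^ k / Real.Gamma (μ + k * ν))) :=
      (summable_simple μ ν (-(s * t ^ ν)) hν).mul_left _
    rw [claimA t ht, ← tsum_mul_left, ← Summable.tsum_sub hsumA hsumB]
    apply tsum_congr
    intro k
    simp only [haco, he]
    rw [hGrec k, rpow_split ht (μ-1) ν k,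
      show (-(s * t ^ ν)) ^ k = (-s) ^ k * (t ^ ν) ^ k by rw [← neg_mul, mul_pow]]
    field_simp
    ring
  -- the integral as a series
  have hIntval : (∫ u in (0:ℝ)..t, (t - u) ^ (ν - 1) * N u) = ∑' k : ℕ, aco k * V k := by
    have hInt : ∀ k : ℕ, Integrable (fun u => aco k * (u ^ (μ - 1 + k * ν) * (t - u) ^ (ν - 1)))
        (volume.restrict (Ioc 0 t)) := fun k =>
      (betaIntegrableOn t (by linarith [hargpos k]) (by linarith) ht).const_mul _
    have hval : ∀ k : ℕ,
        (∫ u in Ioc (0:ℝ) t, u ^ (μ - 1 + k * ν) * (t - u) ^ (ν - 1)) = V k := by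
      intro k
      rw [← intervalIntegral.integral_of_le ht.le,
        betaIntegralValue (by linarith [hargpos k]) (by linarith) ht]
      simp only [hV]
      rw [show μ - 1 + (k:ℝ) * ν + 1 = μ + (k:ℝ) * ν by ring, show ν - 1 + 1 = ν by ring,
        show μ - 1 + (k:ℝ) * ν + (ν - 1) + 2 = μ + (k:ℝ) * ν + ν by ring,
        show μ - 1 + (k:ℝ) * ν + (ν - 1) + 1 = μ + (k:ℝ) * ν + ν - 1 by ring]
    have hVnn : ∀ k : ℕ, 0 ≤ V k := fun k =>
      mul_nonneg (div_nonneg (mul_nonneg (hG2pos k).le hGνpos.le) (hG3pos k).le)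
        (Real.rpow_nonneg ht.le _)
    have hnormval : ∀ k : ℕ,
        (∫ u in Ioc (0:ℝ) t, ‖aco k * (u ^ (μ - 1 + k * ν) * (t - u) ^ (ν - 1))‖)
          = |aco k| * V k := by
      intro k
      rw [← hval k, ← MeasureTheory.integral_const_mul]
      apply setIntegral_congr_fun measurableSet_Ioc
      intro u hu
      simp only
      rw [norm_mul, Real.norm_eq_abs, Real.norm_eq_abs,
        abs_of_nonneg (mul_nonneg (Real.rpow_nonneg hu.1.le _)
          (Real.rpow_nonneg (by linarith [hu.2] : (0:ℝ) ≤ t - u) _))]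
    have hNormSum : Summable (fun k : ℕ =>
        ∫ u in Ioc (0:ℝ) t, ‖aco k * (u ^ (μ - 1 + k * ν) * (t - u) ^ (ν - 1))‖) := by
      apply Summable.congr _ (fun k => (hnormval k).symm)
      apply Summable.of_nonneg_of_le
        (fun k => mul_nonneg (abs_nonneg _) (hVnn k))
        _
        ((summable_poly_gamma (μ - 1 + |1 - μ + ν|) ν (μ + ν) ν (s * t ^ ν)
          (by positivity) hν.le hν).mul_left (|N₀ / ν| * Real.Gamma ν * t ^ (μ + ν - 1)))
      intro k
      have hb : |1 / Real.Gamma (μ - 1 + k * ν) + (1 - μ + ν) / Real.Gamma (μ + k * ν)|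
          ≤ 1 / Real.Gamma (μ - 1 + k * ν) + |1 - μ + ν| / Real.Gamma (μ + k * ν) := by
        refine le_trans (abs_add_le _ _) (le_of_eq ?_)
        rw [abs_div, abs_div, abs_of_pos (hG1pos k), abs_of_pos (hG2pos k), abs_one]
      have habs : |aco k| = |N₀ / ν| * s ^ k *
          |1 / Real.Gamma (μ - 1 + k * ν) + (1 - μ + ν) / Real.Gamma (μ + k * ν)| := by
        simp only [haco]
        rw [abs_mul, abs_mul, abs_pow, abs_neg, abs_of_pos hs0]
      calc |aco k| * V k
          ≤ |N₀ / ν| * s ^ k * (1 / Real.Gamma (μ - 1 + k * ν)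
              + |1 - μ + ν| / Real.Gamma (μ + k * ν)) * V k := by
            rw [habs]
            exact mul_le_mul_of_nonneg_right
              (mul_le_mul_of_nonneg_left hb (by positivity)) (hVnn k)
        _ = |N₀ / ν| * Real.Gamma ν * t ^ (μ + ν - 1) *
              ((μ - 1 + |1 - μ + ν| + ν * k) * (s * t ^ ν) ^ k
                / Real.Gamma (μ + ν + k * ν)) := by
            simp only [hV]
            rw [hGrec k, show μ + ν + (k:ℝ) * ν = μ + (k:ℝ) * ν + ν by ring,
              show μ + (k:ℝ) * ν + ν - 1 = μ + ν - 1 + (k:ℝ) * ν by ring,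
              rpow_split ht (μ + ν - 1) ν k, mul_pow]
            field_simp
            ring
    have hIoc : EqOn (fun u : ℝ => (t - u) ^ (ν - 1) * N u)
        (fun u : ℝ => ∑' k : ℕ, aco k * (u ^ (μ - 1 + k * ν) * (t - u) ^ (ν - 1)))
        (Ioc 0 t) := by
      intro u hu
      simp only
      rw [claimA u hu.1, ← tsum_mul_left]
      exact tsum_congr fun k => by ring
    rw [intervalIntegral.integral_of_le ht.le, setIntegral_congr_fun measurableSet_Ioc hIoc,
      ← MeasureTheory.integral_tsum_of_summable_integral_norm hInt hNormSum]
    apply tsum_congr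
    intro k
    rw [MeasureTheory.integral_const_mul, hval k]
  rw [hIntval, hLHS, ← tsum_mul_left, ← tsum_mul_left, Summable.tsum_eq_zero_add hsume]
  have he0 : e 0 = 0 := by simp [he]
  rw [he0, zero_add]
  apply tsum_congr
  intro k
  simp only [he, haco, hV]
  push_cast
  rw [hGrec k, pow_succ,
    show μ - 1 + ((k:ℝ) + 1) * ν = μ + (k:ℝ) * ν + ν - 1 by ring,
    show μ + ((k:ℝ) + 1) * ν = μ + (k:ℝ) * ν + ν by ring]
  field_simp
  ring
end

section
/- For α > β > 0, a, b > 0 and p sufficiently large, the Laplace transform of t ↦ ∑_{r=0}^∞ (−a)^r t^((α−β)r) E^{r+1}_{α,(α−β)r+1}(−b t^α) at p equals p^(α−1)/(p^α + a p^β + b). -/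
/-!
Since `(r + 1)_k / k! = C(r + k, k)`, for `t > 0` the integrand is `e^{-pt}` times the double
series `∑_{r,k} C(r+k,k) (-a)^r (-b)^k t^e / Γ(e + 1)` with `e = (α - β) r + α k`. Termwise, the
Laplace transform of `t^e / Γ(e + 1)` is `p^{-(e+1)}`, so the transformed series is
`p⁻¹ ∑ C(r+k,k) x^r y^k = p⁻¹ (1 - x - y)⁻¹` with `x = -a p^{β-α}` and `y = -b p^{-α}`, which is
the claimed rational function. For large `p` the transformed series converges absolutely; by
monotone convergence this also gives absolute convergence of the double series for almost every
`t`, which is all that is needed to interchange sum and integral.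
-/

open MeasureTheory Real Set Filter Topology

section DoubleGeometric

variable {𝕜 : Type*} [NormedField 𝕜]

theorem hasSum_choose_mul_pow_mul_pow_fiber (x : 𝕜) {y : 𝕜} (hy : ‖y‖ < 1) (r : ℕ) :
    HasSum (fun k : ℕ => ((r + k).choose k : 𝕜) * x ^ r * y ^ k)
      ((1 - y)⁻¹ * (x / (1 - y)) ^ r) := by
  have hterm : (fun k : ℕ => ((r + k).choose k : 𝕜) * x ^ r * y ^ k)
      = fun k => x ^ r * ((k + r).choose r * y ^ k) := by
    funext k
    rw [← Nat.choose_symm_add, add_comm]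
    ring
  have hvalue : (1 - y)⁻¹ * (x / (1 - y)) ^ r = x ^ r * (1 / (1 - y) ^ (r + 1)) := by
    rw [div_pow, pow_succ', one_div, mul_inv]
    ring
  rw [hterm, hvalue]
  exact (hasSum_choose_mul_geometric_of_norm_lt_one r hy).mul_left (x ^ r)

theorem summable_choose_mul_pow_mul_pow_of_nonneg {x y : ℝ} (hx : 0 ≤ x) (hy : 0 ≤ y)
    (hxy : x + y < 1) :
    Summable (fun q : ℕ × ℕ => ((q.1 + q.2).choose q.2 : ℝ) * x ^ q.1 * y ^ q.2) := by
  have hy1 : ‖y‖ < 1 := by rw [Real.norm_of_nonneg hy]; linarith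
  have hratio : ‖x / (1 - y)‖ < 1 := by
    rw [Real.norm_of_nonneg (div_nonneg hx (by linarith)), div_lt_one (by linarith)]
    linarith
  refine (summable_prod_of_nonneg fun q => by positivity).mpr
    ⟨fun r => (hasSum_choose_mul_pow_mul_pow_fiber x hy1 r).summable, ?_⟩
  simp only [fun r => (hasSum_choose_mul_pow_mul_pow_fiber x hy1 r).tsum_eq]
  exact (summable_geometric_of_norm_lt_one hratio).mul_left _

theorem hasSum_choose_mul_pow_mul_pow [CompleteSpace 𝕜] {x y : 𝕜} (hxy : ‖x‖ + ‖y‖ < 1) :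
    HasSum (fun q : ℕ × ℕ => ((q.1 + q.2).choose q.2 : 𝕜) * x ^ q.1 * y ^ q.2)
      (1 - x - y)⁻¹ := by
  have hy : ‖y‖ < 1 := by linarith [norm_nonneg x]
  have hy' : 1 - y ≠ 0 := sub_ne_zero.mpr (by rintro rfl; simp at hy)
  have hratio : ‖x / (1 - y)‖ < 1 := by
    have := norm_sub_norm_le (1 : 𝕜) y
    rw [norm_one] at this
    rw [norm_div, div_lt_one (by linarith)]
    linarith
  have hsummable :
      Summable (fun q : ℕ × ℕ => ((q.1 + q.2).choose q.2 : 𝕜) * x ^ q.1 * y ^ q.2) := by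
    refine Summable.of_norm_bounded
      (summable_choose_mul_pow_mul_pow_of_nonneg (norm_nonneg x) (norm_nonneg y) hxy) fun q => ?_
    simp only [norm_mul, norm_pow]
    gcongr
    simpa using Nat.norm_cast_le (α := 𝕜) _
  have hgeometric : HasSum (fun r : ℕ => (1 - y)⁻¹ * (x / (1 - y)) ^ r) (1 - x - y)⁻¹ := by
    have hvalue : (1 - x - y)⁻¹ = (1 - y)⁻¹ * (1 - x / (1 - y))⁻¹ := by
      rw [← mul_inv, mul_sub, mul_one, mul_div_cancel₀ _ hy']
      ring
    rw [hvalue]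
    exact (hasSum_geometric_of_norm_lt_one hratio).mul_left (1 - y)⁻¹
  rw [← (hsummable.hasSum.prod_fiberwise (hasSum_choose_mul_pow_mul_pow_fiber x hy)).unique
    hgeometric]
  exact hsummable.hasSum

end DoubleGeometric

theorem ae_summable_norm_of_summable_integral_norm {ι X E : Type*} [Countable ι]
    [MeasurableSpace X] {μ : Measure X} [NormedAddCommGroup E] {f : ι → X → E}
    (hf : ∀ i, Integrable (f i) μ) (hsum : Summable fun i => ∫ x, ‖f i x‖ ∂μ) :
    ∀ᵐ x ∂μ, Summable fun i => ‖f i x‖ := by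
  refine summable_norm_of_tsum_eLpNorm_ne_top le_rfl (fun i => (hf i).aestronglyMeasurable) ?_
  simp only [eLpNorm_one_eq_lintegral_enorm,
    ← fun i => ofReal_integral_norm_eq_lintegral_enorm (hf i),
    ← ENNReal.ofReal_tsum_of_nonneg (fun i => integral_nonneg fun x => norm_nonneg _) hsum]
  exact ENNReal.ofReal_ne_top

theorem integral_exp_neg_mul_mul_rpow {e p : ℝ} (he : -1 < e) (hp : 0 < p) :
    ∫ t in Ioi (0 : ℝ), exp (-p * t) * t ^ e = Gamma (e + 1) * p ^ (-(e + 1)) := by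
  have h := integral_rpow_mul_exp_neg_mul_Ioi (a := e + 1) (by linarith) hp
  rw [add_sub_cancel_right, one_div, inv_rpow hp.le, ← rpow_neg hp.le] at h
  rw [mul_comm, ← h]
  refine setIntegral_congr_fun measurableSet_Ioi fun t _ => ?_
  rw [neg_mul, mul_comm]

theorem integrableOn_exp_neg_mul_mul_rpow {e p : ℝ} (he : -1 < e) (hp : 0 < p) :
    IntegrableOn (fun t => exp (-p * t) * t ^ e) (Ioi 0) := by
  refine (integrableOn_rpow_mul_exp_neg_mul_rpow he one_pos hp).congr_fun (fun t _ => ?_)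
    measurableSet_Ioi
  dsimp only
  rw [rpow_one, mul_comm]

theorem ascPochhammer_eval_natCast_add_one {S : Type*} [Semiring S] (r k : ℕ) :
    (ascPochhammer S k).eval ((r : S) + 1) = (k.factorial * (r + k).choose k : ℕ) := by
  rw [← Nat.cast_add_one, ascPochhammer_nat_eq_natCast_ascFactorial,
    Nat.ascFactorial_eq_factorial_mul_choose]

/-- The `q`-th term of the bivariate Mittag-Leffler series
`E_{(u,v),1}(x t^u, y t^v) = ∑_{r,k} C(r+k,k) (x t^u)^r (y t^v)^k / Γ(u r + v k + 1)`. -/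
noncomputable def bivariateMittagLefflerTerm (u v x y : ℝ) (q : ℕ × ℕ) (t : ℝ) : ℝ :=
  ((q.1 + q.2).choose q.2 : ℝ) * x ^ q.1 * y ^ q.2 * t ^ (u * q.1 + v * q.2) /
    Gamma (u * q.1 + v * q.2 + 1)

section BivariateMittagLeffler

variable {u v : ℝ}

theorem abs_bivariateMittagLefflerTerm (hu : 0 ≤ u) (hv : 0 ≤ v) (x y : ℝ) (q : ℕ × ℕ) {t : ℝ}
    (ht : 0 ≤ t) :
    |bivariateMittagLefflerTerm u v x y q t| = bivariateMittagLefflerTerm u v |x| |y| q t := by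
  have hΓ : 0 < Gamma (u * q.1 + v * q.2 + 1) := Gamma_pos_of_pos (by positivity)
  simp only [bivariateMittagLefflerTerm, abs_div, abs_mul, abs_pow, Nat.abs_cast,
    abs_of_nonneg (rpow_nonneg ht _), abs_of_pos hΓ]

theorem exp_neg_mul_mul_bivariateMittagLefflerTerm (x y p : ℝ) (q : ℕ × ℕ) (t : ℝ) :
    exp (-p * t) * bivariateMittagLefflerTerm u v x y q t =
      (q.1 + q.2).choose q.2 * x ^ q.1 * y ^ q.2 / Gamma (u * q.1 + v * q.2 + 1) *
        (exp (-p * t) * t ^ (u * q.1 + v * q.2)) := by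
  unfold bivariateMittagLefflerTerm
  ring

theorem integrableOn_exp_neg_mul_mul_bivariateMittagLefflerTerm (hu : 0 ≤ u) (hv : 0 ≤ v)
    (x y : ℝ) (q : ℕ × ℕ) {p : ℝ} (hp : 0 < p) :
    IntegrableOn (fun t => exp (-p * t) * bivariateMittagLefflerTerm u v x y q t) (Ioi 0) := by
  have he : -1 < u * q.1 + v * q.2 := neg_one_lt_zero.trans_le (by positivity)
  simp only [exp_neg_mul_mul_bivariateMittagLefflerTerm]
  exact (integrableOn_exp_neg_mul_mul_rpow he hp).const_mul _

theorem integral_exp_neg_mul_mul_bivariateMittagLefflerTerm (hu : 0 ≤ u) (hv : 0 ≤ v)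
    (x y : ℝ) (q : ℕ × ℕ) {p : ℝ} (hp : 0 < p) :
    ∫ t in Ioi 0, exp (-p * t) * bivariateMittagLefflerTerm u v x y q t =
      p⁻¹ * ((q.1 + q.2).choose q.2 * (x * p ^ (-u)) ^ q.1 * (y * p ^ (-v)) ^ q.2) := by
  have he : -1 < u * q.1 + v * q.2 := neg_one_lt_zero.trans_le (by positivity)
  have hΓ : 0 < Gamma (u * q.1 + v * q.2 + 1) := Gamma_pos_of_pos (by linarith)
  have hpow : p ^ (-(u * q.1 + v * q.2 + 1)) = p⁻¹ * (p ^ (-u)) ^ q.1 * (p ^ (-v)) ^ q.2 := by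
    rw [show -(u * q.1 + v * q.2 + 1) = -1 + -u * q.1 + -v * q.2 by ring,
      rpow_add hp, rpow_add hp, rpow_neg_one, rpow_mul hp.le, rpow_mul hp.le, rpow_natCast,
      rpow_natCast]
  simp only [exp_neg_mul_mul_bivariateMittagLefflerTerm]
  rw [integral_const_mul, integral_exp_neg_mul_mul_rpow he hp, hpow]
  field_simp
  ring

theorem integral_exp_neg_mul_mul_tsum_bivariateMittagLefflerTerm (hu : 0 ≤ u) (hv : 0 ≤ v)
    {x y p : ℝ} (hp : 0 < p) (hxy : |x| * p ^ (-u) + |y| * p ^ (-v) < 1) :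
    ∫ t in Ioi 0, exp (-p * t) * ∑' r, ∑' k, bivariateMittagLefflerTerm u v x y (r, k) t =
      p⁻¹ * (1 - x * p ^ (-u) - y * p ^ (-v))⁻¹ := by
  have hnorm (z w : ℝ) : ‖z * p ^ w‖ = |z| * p ^ w := by
    rw [norm_mul, Real.norm_eq_abs, Real.norm_of_nonneg (rpow_nonneg hp.le _)]
  set F : ℕ × ℕ → ℝ → ℝ := fun q t => exp (-p * t) * bivariateMittagLefflerTerm u v x y q t
  have hF_int (q : ℕ × ℕ) : Integrable (F q) (volume.restrict (Ioi 0)) :=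
    integrableOn_exp_neg_mul_mul_bivariateMittagLefflerTerm hu hv x y q hp
  have hF_norm (q : ℕ × ℕ) : ∫ t in Ioi 0, ‖F q t‖ =
      p⁻¹ * ((q.1 + q.2).choose q.2 * (|x| * p ^ (-u)) ^ q.1 * (|y| * p ^ (-v)) ^ q.2) := by
    rw [← integral_exp_neg_mul_mul_bivariateMittagLefflerTerm hu hv |x| |y| q hp]
    refine setIntegral_congr_fun measurableSet_Ioi fun t ht => ?_
    rw [Real.norm_eq_abs, abs_mul, abs_of_pos (exp_pos _),
      abs_bivariateMittagLefflerTerm hu hv x y q (le_of_lt ht)]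
  have hF_sum : Summable fun q => ∫ t in Ioi 0, ‖F q t‖ := by
    simp only [hF_norm]
    have hsmall : ‖|x| * p ^ (-u)‖ + ‖|y| * p ^ (-v)‖ < 1 := by
      rwa [hnorm, hnorm, abs_abs, abs_abs]
    exact (hasSum_choose_mul_pow_mul_pow hsmall).summable.mul_left _
  have hF_tsum : ∀ᵐ t ∂(volume.restrict (Ioi 0)),
      exp (-p * t) * ∑' r, ∑' k, bivariateMittagLefflerTerm u v x y (r, k) t = ∑' q, F q t := by
    filter_upwards [ae_summable_norm_of_summable_integral_norm hF_int hF_sum] with t ht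
    rw [ht.of_norm.tsum_prod]
    simp only [F, tsum_mul_left]
  rw [integral_congr_ae hF_tsum, ← integral_tsum_of_summable_integral_norm hF_int hF_sum]
  simp only [F, integral_exp_neg_mul_mul_bivariateMittagLefflerTerm hu hv x y _ hp]
  rw [tsum_mul_left, (hasSum_choose_mul_pow_mul_pow (by rwa [hnorm, hnorm])).tsum_eq]

theorem bivariateMittagLefflerTerm_eq_ascPochhammer (x y : ℝ) (r k : ℕ) {t : ℝ} (ht : 0 < t) :
    x ^ r * t ^ (u * r) * ((ascPochhammer ℝ k).eval ((r : ℝ) + 1) * (y * t ^ v) ^ k /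
      (k.factorial * Gamma (u * r + 1 + k * v))) = bivariateMittagLefflerTerm u v x y (r, k) t := by
  have hfact : (k.factorial : ℝ) ≠ 0 := Nat.cast_ne_zero.mpr k.factorial_ne_zero
  rw [ascPochhammer_eval_natCast_add_one, bivariateMittagLefflerTerm, mul_pow,
    ← rpow_mul_natCast ht.le, rpow_add ht, show u * r + 1 + k * v = u * r + v * k + 1 by ring]
  push_cast
  field_simp

end BivariateMittagLeffler

theorem eventually_abs_mul_rpow_neg_add_abs_mul_rpow_neg_lt_one {u v : ℝ} (hu : 0 < u)
    (hv : 0 < v) (x y : ℝ) : ∀ᶠ p in atTop, |x| * p ^ (-u) + |y| * p ^ (-v) < 1 := by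
  have h : Tendsto (fun p : ℝ => |x| * p ^ (-u) + |y| * p ^ (-v)) atTop (𝓝 0) := by
    simpa using ((tendsto_rpow_neg_atTop hu).const_mul |x|).add
      ((tendsto_rpow_neg_atTop hv).const_mul |y|)
  exact h.eventually (gt_mem_nhds one_pos)

theorem rpow_sub_one_div_rpow_add_mul_rpow_add {p : ℝ} (hp : 0 < p) (α β a b : ℝ) :
    p ^ (α - 1) / (p ^ α + a * p ^ β + b) = p⁻¹ * (1 + a * p ^ (-(α - β)) + b * p ^ (-α))⁻¹ := by
  have hpα : p ^ α ≠ 0 := (rpow_pos_of_pos hp α).ne'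
  have hden : p ^ α + a * p ^ β + b = p ^ α * (1 + a * p ^ (-(α - β)) + b * p ^ (-α)) := by
    rw [rpow_neg hp.le, rpow_neg hp.le, rpow_sub hp]
    field_simp
  rw [hden, rpow_sub_one hp.ne', div_div, mul_left_comm, div_mul_cancel_left₀ hpα, mul_inv]

theorem series_of_prabhakar_laplace_transform_general
    (α β a b : ℝ) (hαβ : β < α) (hβ : 0 < β) :
    ∃ P : ℝ, ∀ p : ℝ, P < p →
      ∫ t in Ioi (0 : ℝ),
          Real.exp (-p * t) *
            ∑' r : ℕ, (-a) ^ r * t ^ ((α - β) * r) *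
              ∑' k : ℕ, (ascPochhammer ℝ k).eval ((r : ℝ) + 1) * (-(b * t ^ α)) ^ k /
                (k.factorial * Real.Gamma ((α - β) * r + 1 + k * α))
        = p ^ (α - 1) / (p ^ α + a * p ^ β + b) := by
  have hα : 0 < α := hβ.trans hαβ
  obtain ⟨P, hP⟩ := ((eventually_abs_mul_rpow_neg_add_abs_mul_rpow_neg_lt_one (sub_pos.mpr hαβ)
    hα (-a) (-b)).and (eventually_gt_atTop 0)).exists_forall_of_atTop
  refine ⟨P, fun p hPp => ?_⟩
  obtain ⟨hsmall, hp⟩ := hP p hPp.le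
  have hintegrand : EqOn
      (fun t => exp (-p * t) * ∑' r : ℕ, (-a) ^ r * t ^ ((α - β) * r) *
        ∑' k : ℕ, (ascPochhammer ℝ k).eval ((r : ℝ) + 1) * (-(b * t ^ α)) ^ k /
          (k.factorial * Gamma ((α - β) * r + 1 + k * α)))
      (fun t => exp (-p * t) * ∑' r, ∑' k,
        bivariateMittagLefflerTerm (α - β) α (-a) (-b) (r, k) t) (Ioi 0) := by
    intro t ht
    simp only [← tsum_mul_left, ← neg_mul, bivariateMittagLefflerTerm_eq_ascPochhammer _ _ _ _ ht]
  rw [setIntegral_congr_fun measurableSet_Ioi hintegrand,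
    integral_exp_neg_mul_mul_tsum_bivariateMittagLefflerTerm (sub_pos.mpr hαβ).le hα.le hp hsmall,
    rpow_sub_one_div_rpow_add_mul_rpow_add hp]
  simp only [neg_mul, sub_neg_eq_add]

theorem series_of_prabhakar_laplace_transform
    (α β a b : ℝ) (hαβ : β < α) (hβ : 0 < β) (ha : 0 < a) (hb : 0 < b) :
    ∃ P : ℝ, ∀ p : ℝ, P < p →
      ∫ t in Ioi (0 : ℝ),
          Real.exp (-p * t) *
            ∑' r : ℕ, (-a) ^ r * t ^ ((α - β) * r) *
              ∑' k : ℕ, (ascPochhammer ℝ k).eval ((r : ℝ) + 1) * (-(b * t ^ α)) ^ k /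
                (k.factorial * Real.Gamma ((α - β) * r + 1 + k * α))
        = p ^ (α - 1) / (p ^ α + a * p ^ β + b) :=
  series_of_prabhakar_laplace_transform_general α β a b hαβ hβ
end
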